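/- Let A and B be finite-dimensional k-algebras, M an A-B-bimodule and N a B-A-bimodule such that the regular A-A-bimodule A is isomorphic to a direct summand of M ⊗_B N, and assume that the functor M ⊗_B − : B-mod → A-mod is left adjoint to N ⊗_A − : A-mod → B-mod. Then M is a generator of the category of left A-modules and N is a generator of the category of right A-modules; that is, the regular left A-module A is isomorphic to a direct summand of a finite direct sum of copies of M, and the regular right A-module A is isomorphic to a direct summand of a finite direct sum of copies of N. -/

import Mathlib

set_option linter.unusedSectionVars false

open scoped TensorProduct
open MulOpposite

universe u

namespace JJ

noncomputable section

section BalTensor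

variable (B : Type u) [Ring B] (M : Type u) [AddCommGroup M] [Module Bᵐᵒᵖ M]
  (N : Type u) [AddCommGroup N] [Module B N]

/-- The subgroup of relations defining the balanced tensor product `M ⊗_B N`. -/
def balRel : Submodule ℤ (TensorProduct ℤ M N) :=
  Submodule.span ℤ { z | ∃ (b : B) (m : M) (n : N),
    z = (op b • m) ⊗ₜ[ℤ] n - m ⊗ₜ[ℤ] (b • n) }

/-- The balanced tensor product `M ⊗_B N` of a right `B`-module `M` and a left `B`-module `N`. -/
def BalTensor : Type u := TensorProduct ℤ M N ⧸ balRel B M N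

instance : AddCommGroup (BalTensor B M N) :=
  inferInstanceAs (AddCommGroup (TensorProduct ℤ M N ⧸ balRel B M N))

/-- The canonical projection onto the balanced tensor product. -/
def BalTensor.mk : TensorProduct ℤ M N →+ BalTensor B M N :=
  (balRel B M N).mkQ.toAddMonoidHom

/-- The image of a pure tensor in the balanced tensor product. -/
def BalTensor.tmul (m : M) (n : N) : BalTensor B M N := BalTensor.mk B M N (m ⊗ₜ n)

lemma BalTensor.mk_surjective : Function.Surjective (BalTensor.mk B M N) :=
  Submodule.mkQ_surjective _

lemma BalTensor.balance (b : B) (m : M) (n : N) :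
    BalTensor.tmul B M N (op b • m) n = BalTensor.tmul B M N m (b • n) := by
  have h : ((op b • m) ⊗ₜ[ℤ] n - m ⊗ₜ[ℤ] (b • n)) ∈ balRel B M N :=
    Submodule.subset_span ⟨b, m, n, rfl⟩
  have h2 := (Submodule.Quotient.mk_eq_zero (balRel B M N)).2 h
  rw [Submodule.Quotient.mk_sub] at h2
  exact sub_eq_zero.1 h2

end BalTensor

section LeftAction

variable (B : Type u) [Ring B] (M : Type u) [AddCommGroup M] [Module Bᵐᵒᵖ M]
  (N : Type u) [AddCommGroup N] [Module B N]
  (A : Type u) [Ring A] [Module A M] [SMulCommClass A Bᵐᵒᵖ M]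

/-- The left action of `a : A` on the plain tensor product. -/
def lActAux (a : A) : TensorProduct ℤ M N →ₗ[ℤ] TensorProduct ℤ M N :=
  LinearMap.rTensor N (DistribMulAction.toAddMonoidHom M a).toIntLinearMap

lemma lActAux_tmul (a : A) (m : M) (n : N) :
    lActAux M N A a (m ⊗ₜ n) = (a • m) ⊗ₜ n := by
  exact LinearMap.rTensor_tmul _ _ _ _

lemma lActAux_rel (a : A) :
    balRel B M N ≤ (balRel B M N).comap (lActAux M N A a) := by
  rw [balRel, Submodule.span_le]
  rintro z ⟨b, m, n, rfl⟩
  simp only [SetLike.mem_coe, Submodule.mem_comap, map_sub, lActAux_tmul]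
  rw [smul_comm a (op b) m]
  exact Submodule.subset_span ⟨b, a • m, n, rfl⟩

/-- The left action of `A` on the balanced tensor product. -/
def lAct (a : A) : BalTensor B M N →ₗ[ℤ] BalTensor B M N :=
  Submodule.mapQ _ _ (lActAux M N A a) (lActAux_rel B M N A a)

instance : SMul A (BalTensor B M N) := ⟨fun a x => lAct B M N A a x⟩

lemma BalTensor.lsmul_mk (a : A) (x : TensorProduct ℤ M N) :
    a • (BalTensor.mk B M N x) = BalTensor.mk B M N (lActAux M N A a x) := rfl

lemma BalTensor.lsmul_tmul (a : A) (m : M) (n : N) :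
    a • (BalTensor.tmul B M N m n) = BalTensor.tmul B M N (a • m) n := by
  rw [BalTensor.tmul, BalTensor.lsmul_mk, lActAux_tmul]
  rfl

instance BalTensor.instLeftModule : Module A (BalTensor B M N) where
  one_smul x := by
    obtain ⟨y, rfl⟩ := BalTensor.mk_surjective B M N x
    rw [BalTensor.lsmul_mk]
    congr 1
    have h : lActAux M N A (1 : A) = LinearMap.id :=
      TensorProduct.ext' fun m n => by erw [lActAux_tmul, one_smul]; rfl
    rw [h]; rfl
  mul_smul a b x := by
    obtain ⟨y, rfl⟩ := BalTensor.mk_surjective B M N x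
    rw [BalTensor.lsmul_mk, BalTensor.lsmul_mk, BalTensor.lsmul_mk]
    congr 1
    have h : lActAux M N A (a * b) = (lActAux M N A a).comp (lActAux M N A b) :=
      TensorProduct.ext' fun m n => by
        show lActAux M N A (a * b) (m ⊗ₜ n) = lActAux M N A a (lActAux M N A b (m ⊗ₜ n))
        simp only [LinearMap.comp_apply, lActAux_tmul, mul_smul]
    rw [h]; rfl
  smul_zero a := map_zero (lAct B M N A a)
  smul_add a x y := map_add (lAct B M N A a) x y
  add_smul a b x := by
    obtain ⟨y, rfl⟩ := BalTensor.mk_surjective B M N x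
    rw [BalTensor.lsmul_mk, BalTensor.lsmul_mk, BalTensor.lsmul_mk, ← map_add]
    congr 1
    have h : lActAux M N A (a + b) = lActAux M N A a + lActAux M N A b :=
      TensorProduct.ext' fun m n => by
        show lActAux M N A (a + b) (m ⊗ₜ n) = lActAux M N A a (m ⊗ₜ n) + lActAux M N A b (m ⊗ₜ n)
        simp only [LinearMap.add_apply, lActAux_tmul, add_smul, TensorProduct.add_tmul]
    rw [h]; rfl
  zero_smul x := by
    obtain ⟨y, rfl⟩ := BalTensor.mk_surjective B M N x
    rw [BalTensor.lsmul_mk]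
    have h : lActAux M N A (0 : A) = 0 :=
      TensorProduct.ext' fun m n => by
        show lActAux M N A 0 (m ⊗ₜ n) = 0
        simp only [lActAux_tmul, zero_smul, TensorProduct.zero_tmul, LinearMap.zero_apply]
    rw [h]
    simp

end LeftAction

section RightAction

variable (B : Type u) [Ring B] (M : Type u) [AddCommGroup M] [Module Bᵐᵒᵖ M]
  (N : Type u) [AddCommGroup N] [Module B N]
  (C : Type u) [Ring C] [Module Cᵐᵒᵖ N] [SMulCommClass B Cᵐᵒᵖ N]

/-- The right action of `c : Cᵐᵒᵖ` on the plain tensor product. -/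
def rActAux (c : Cᵐᵒᵖ) : TensorProduct ℤ M N →ₗ[ℤ] TensorProduct ℤ M N :=
  LinearMap.lTensor M (DistribMulAction.toAddMonoidHom N c).toIntLinearMap

lemma rActAux_tmul (c : Cᵐᵒᵖ) (m : M) (n : N) :
    rActAux M N C c (m ⊗ₜ n) = m ⊗ₜ (c • n) := by
  exact LinearMap.lTensor_tmul _ _ _ _

lemma rActAux_rel (c : Cᵐᵒᵖ) :
    balRel B M N ≤ (balRel B M N).comap (rActAux M N C c) := by
  rw [balRel, Submodule.span_le]
  rintro z ⟨b, m, n, rfl⟩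
  simp only [SetLike.mem_coe, Submodule.mem_comap, map_sub, rActAux_tmul]
  rw [← smul_comm b c n]
  exact Submodule.subset_span ⟨b, m, c • n, rfl⟩

/-- The right action of `Cᵐᵒᵖ` on the balanced tensor product. -/
def rAct (c : Cᵐᵒᵖ) : BalTensor B M N →ₗ[ℤ] BalTensor B M N :=
  Submodule.mapQ _ _ (rActAux M N C c) (rActAux_rel B M N C c)

instance : SMul Cᵐᵒᵖ (BalTensor B M N) := ⟨fun c x => rAct B M N C c x⟩

lemma BalTensor.rsmul_mk (c : Cᵐᵒᵖ) (x : TensorProduct ℤ M N) :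
    c • (BalTensor.mk B M N x) = BalTensor.mk B M N (rActAux M N C c x) := rfl

lemma BalTensor.rsmul_tmul (c : Cᵐᵒᵖ) (m : M) (n : N) :
    c • (BalTensor.tmul B M N m n) = BalTensor.tmul B M N m (c • n) := by
  rw [BalTensor.tmul, BalTensor.rsmul_mk, rActAux_tmul]
  rfl

instance BalTensor.instRightModule : Module Cᵐᵒᵖ (BalTensor B M N) where
  one_smul x := by
    obtain ⟨y, rfl⟩ := BalTensor.mk_surjective B M N x
    rw [BalTensor.rsmul_mk]
    congr 1
    have h : rActAux M N C (1 : Cᵐᵒᵖ) = LinearMap.id :=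
      TensorProduct.ext' fun m n => by erw [rActAux_tmul, one_smul]; rfl
    rw [h]; rfl
  mul_smul a b x := by
    obtain ⟨y, rfl⟩ := BalTensor.mk_surjective B M N x
    rw [BalTensor.rsmul_mk, BalTensor.rsmul_mk, BalTensor.rsmul_mk]
    congr 1
    have h : rActAux M N C (a * b) = (rActAux M N C a).comp (rActAux M N C b) :=
      TensorProduct.ext' fun m n => by
        show rActAux M N C (a * b) (m ⊗ₜ n) = rActAux M N C a (rActAux M N C b (m ⊗ₜ n))
        simp only [LinearMap.comp_apply, rActAux_tmul, mul_smul]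
    rw [h]; rfl
  smul_zero c := map_zero (rAct B M N C c)
  smul_add c x y := map_add (rAct B M N C c) x y
  add_smul a b x := by
    obtain ⟨y, rfl⟩ := BalTensor.mk_surjective B M N x
    rw [BalTensor.rsmul_mk, BalTensor.rsmul_mk, BalTensor.rsmul_mk, ← map_add]
    congr 1
    have h : rActAux M N C (a + b) = rActAux M N C a + rActAux M N C b :=
      TensorProduct.ext' fun m n => by
        show rActAux M N C (a + b) (m ⊗ₜ n) = rActAux M N C a (m ⊗ₜ n) + rActAux M N C b (m ⊗ₜ n)
        simp only [LinearMap.add_apply, rActAux_tmul, add_smul, TensorProduct.tmul_add]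
    rw [h]; rfl
  zero_smul x := by
    obtain ⟨y, rfl⟩ := BalTensor.mk_surjective B M N x
    rw [BalTensor.rsmul_mk]
    have h : rActAux M N C (0 : Cᵐᵒᵖ) = 0 :=
      TensorProduct.ext' fun m n => by
        show rActAux M N C 0 (m ⊗ₜ n) = 0
        simp only [rActAux_tmul, zero_smul, TensorProduct.tmul_zero, LinearMap.zero_apply]
    rw [h]
    simp

end RightAction

section Comm

variable (B : Type u) [Ring B] (M : Type u) [AddCommGroup M] [Module Bᵐᵒᵖ M]
  (N : Type u) [AddCommGroup N] [Module B N]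
  (A : Type u) [Ring A] [Module A M] [SMulCommClass A Bᵐᵒᵖ M]
  (C : Type u) [Ring C] [Module Cᵐᵒᵖ N] [SMulCommClass B Cᵐᵒᵖ N]

instance BalTensor.instSMulCommClass : SMulCommClass A Cᵐᵒᵖ (BalTensor B M N) := by
  constructor
  intro a c x
  obtain ⟨y, rfl⟩ := BalTensor.mk_surjective B M N x
  rw [BalTensor.rsmul_mk, BalTensor.lsmul_mk, BalTensor.lsmul_mk, BalTensor.rsmul_mk]
  congr 1
  have h : (lActAux M N A a).comp (rActAux M N C c)
      = (rActAux M N C c).comp (lActAux M N A a) :=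
    TensorProduct.ext' fun m n => by
      show lActAux M N A a (rActAux M N C c (m ⊗ₜ n)) = rActAux M N C c (lActAux M N A a (m ⊗ₜ n))
      simp only [LinearMap.comp_apply, lActAux_tmul, rActAux_tmul]
  exact DFunLike.congr_fun h y

end Comm

section BimodHom

variable (A : Type u) [Ring A] (C : Type u) [Ring C]
variable (X : Type u) [AddCommGroup X] [Module A X] [Module Cᵐᵒᵖ X]
variable (Y : Type u) [AddCommGroup Y] [Module A Y] [Module Cᵐᵒᵖ Y]

/-- A map of `(A,C)`-bimodules: additive, left `A`-equivariant and right `C`-equivariant. -/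
structure IsBimodHom (f : X → Y) : Prop where
  map_add : ∀ x y, f (x + y) = f x + f y
  map_lsmul : ∀ (a : A) (x : X), f (a • x) = a • f x
  map_rsmul : ∀ (c : Cᵐᵒᵖ) (x : X), f (c • x) = c • f x

/-- `X` is (isomorphic to) a direct summand of `Y` as an `(A,C)`-bimodule,
i.e. a retract of `Y`. -/
def IsBimodSummand : Prop :=
  ∃ (i : X → Y) (p : Y → X), IsBimodHom A C X Y i ∧ IsBimodHom A C Y X p ∧ ∀ x, p (i x) = x

end BimodHom

section Jorder

variable (k : Type u) [Field k]

/-- A finite-dimensional `(A,B)`-bimodule over `k`, whose two induced `k`-actions agree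
with the given one. -/
structure BimodData (A B : Type u) [Ring A] [Ring B] [Algebra k A] [Algebra k B] :
    Type (u + 1) where
  X : Type u
  [acg : AddCommGroup X]
  [modk : Module k X]
  [modl : Module A X]
  [modr : Module Bᵐᵒᵖ X]
  [scc : SMulCommClass A Bᵐᵒᵖ X]
  [tl : IsScalarTower k A X]
  [tr : IsScalarTower k Bᵐᵒᵖ X]
  [fd : FiniteDimensional k X]

attribute [instance] BimodData.acg BimodData.modk BimodData.modl BimodData.modr BimodData.scc
  BimodData.tl BimodData.tr BimodData.fd

variable (A B : Type u) [Ring A] [Ring B] [Algebra k A] [Algebra k B]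

/-- `A ≥_J B`: there are finite-dimensional bimodules `M`, `N` such that the regular
`A`-`A`-bimodule `A` is a direct summand of `M ⊗_B N`. -/
def Jge : Prop :=
  ∃ (M : BimodData k A B) (N : BimodData k B A),
    IsBimodSummand A A A (BalTensor B M.X N.X)

/-- `A ≤_J B`. -/
def Jle : Prop := Jge k B A

/-- `A ∼_J B`: two-sided equivalence. -/
def Jequiv : Prop := Jge k A B ∧ Jge k B A

/-- `A >_J B`: strict two-sided inequality. -/
def Jgt : Prop := Jge k A B ∧ ¬ Jge k B A

end Jorder


section RMap

variable (B : Type u) [Ring B] (M : Type u) [AddCommGroup M] [Module Bᵐᵒᵖ M]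
  (A : Type u) [Ring A] [Module A M] [SMulCommClass A Bᵐᵒᵖ M]
  (X : Type u) [AddCommGroup X] [Module B X]
  (X' : Type u) [AddCommGroup X'] [Module B X']

/-- Auxiliary map `M ⊗ X → M ⊗ X'` induced by `f : X → X'`. -/
def rmapAux (f : X →ₗ[B] X') : TensorProduct ℤ M X →ₗ[ℤ] TensorProduct ℤ M X' :=
  LinearMap.lTensor M f.toAddMonoidHom.toIntLinearMap

lemma rmapAux_tmul (f : X →ₗ[B] X') (m : M) (x : X) :
    rmapAux B M X X' f (m ⊗ₜ x) = m ⊗ₜ (f x) := by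
  exact LinearMap.lTensor_tmul _ _ _ _

lemma rmapAux_rel (f : X →ₗ[B] X') :
    balRel B M X ≤ (balRel B M X').comap (rmapAux B M X X' f) := by
  rw [balRel, Submodule.span_le]
  rintro z ⟨b, m, x, rfl⟩
  simp only [SetLike.mem_coe, Submodule.mem_comap, map_sub, rmapAux_tmul, map_smul]
  exact Submodule.subset_span ⟨b, m, f x, rfl⟩

/-- The map `M ⊗_B X → M ⊗_B X'` induced by `f : X → X'`, as a `ℤ`-linear map. -/
def rmapQ (f : X →ₗ[B] X') : BalTensor B M X →ₗ[ℤ] BalTensor B M X' :=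
  Submodule.mapQ _ _ (rmapAux B M X X' f) (rmapAux_rel B M X X' f)

lemma rmapQ_mk (f : X →ₗ[B] X') (z : TensorProduct ℤ M X) :
    rmapQ B M X X' f (BalTensor.mk B M X z) = BalTensor.mk B M X' (rmapAux B M X X' f z) :=
  rfl

lemma rmapAux_lActAux (f : X →ₗ[B] X') (a : A) (z : TensorProduct ℤ M X) :
    rmapAux B M X X' f (lActAux M X A a z) = lActAux M X' A a (rmapAux B M X X' f z) := by
  have h : (rmapAux B M X X' f).comp (lActAux M X A a)
      = (lActAux M X' A a).comp (rmapAux B M X X' f) := by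
    unfold rmapAux lActAux
    erw [LinearMap.lTensor_comp_rTensor, LinearMap.rTensor_comp_lTensor]
  exact DFunLike.congr_fun h z

/-- The functorial map `M ⊗_B X → M ⊗_B X'` induced by `f : X → X'`,
as a map of left `A`-modules. -/
def rmapA (f : X →ₗ[B] X') : BalTensor B M X →ₗ[A] BalTensor B M X' where
  toFun := rmapQ B M X X' f
  map_add' := map_add _
  map_smul' a y := by
    obtain ⟨z, rfl⟩ := BalTensor.mk_surjective B M X y
    simp only [RingHom.id_apply]
    rw [BalTensor.lsmul_mk, rmapQ_mk, rmapQ_mk, BalTensor.lsmul_mk, rmapAux_lActAux]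

end RMap

section Adjunction

variable (k : Type u) [Field k]

/-- A bundled finite (i.e. finite-dimensional) module over a ring. -/
structure FinModuleData (R : Type u) [Ring R] : Type (u + 1) where
  X : Type u
  [acg : AddCommGroup X]
  [mod : Module R X]
  [fin : Module.Finite R X]

attribute [instance] FinModuleData.acg FinModuleData.mod FinModuleData.fin

variable (A : Type u) [Ring A] (B : Type u) [Ring B]
  (M : Type u) [AddCommGroup M] [Module A M] [Module Bᵐᵒᵖ M] [SMulCommClass A Bᵐᵒᵖ M]
  (N : Type u) [AddCommGroup N] [Module B N] [Module Aᵐᵒᵖ N] [SMulCommClass B Aᵐᵒᵖ N]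

/-- The functor `M ⊗_B −` from finite-dimensional left `B`-modules to finite-dimensional
left `A`-modules is left adjoint to the functor `N ⊗_A −`: there is a bijection of
hom-sets which is natural in both variables. -/
def TensorAdjunction : Prop :=
  ∃ e : ∀ (X : FinModuleData B) (Y : FinModuleData A),
      (BalTensor B M X.X →ₗ[A] Y.X) ≃ (X.X →ₗ[B] BalTensor A N Y.X),
    (∀ (X X' : FinModuleData B) (f : X.X →ₗ[B] X'.X) (Y : FinModuleData A)
        (h : BalTensor B M X'.X →ₗ[A] Y.X),
        e X Y (h.comp (rmapA B M A X.X X'.X f)) = (e X' Y h).comp f) ∧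
    (∀ (X : FinModuleData B) (Y Y' : FinModuleData A) (g : Y.X →ₗ[A] Y'.X)
        (h : BalTensor B M X.X →ₗ[A] Y.X),
        e X Y' (g.comp h) = (rmapA A N B Y.X Y'.X g).comp (e X Y h))

end Adjunction

/-!
Choose generators `n₁, …, n_r` of `N` over `B`. Every element of `M ⊗_B N` is then of the form
`∑ mᵢ ⊗ nᵢ`, so `(mᵢ) ↦ ∑ mᵢ ⊗ nᵢ` is a surjection `M^r ↠ M ⊗_B N` of left `A`-modules.
Followed by the bimodule retraction `M ⊗_B N ↠ A` it is a surjection onto the free module `A`,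
which therefore splits. Generators of `M` over `Bᵒᵖ` give the right-hand statement in the same way.
-/

instance instProjectiveMulOppositeSelf (R : Type*) [Ring R] : Module.Projective Rᵐᵒᵖ R :=
  .of_equiv (MulOpposite.opLinearEquiv Rᵐᵒᵖ (M := R)).symm

section BimodHom

variable {A C X Y : Type u} [Ring A] [Ring C]
  [AddCommGroup X] [Module A X] [Module Cᵐᵒᵖ X] [AddCommGroup Y] [Module A Y] [Module Cᵐᵒᵖ Y]
  {f : X → Y}

def IsBimodHom.toLinearMap (hf : IsBimodHom A C X Y f) : X →ₗ[A] Y :=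
  ⟨⟨f, hf.map_add⟩, hf.map_lsmul⟩

def IsBimodHom.toOpLinearMap (hf : IsBimodHom A C X Y f) : X →ₗ[Cᵐᵒᵖ] Y :=
  ⟨⟨f, hf.map_add⟩, hf.map_rsmul⟩

end BimodHom

namespace BalTensor

variable {B M N : Type u} [Ring B] [AddCommGroup M] [Module Bᵐᵒᵖ M] [AddCommGroup N] [Module B N]

lemma tmul_add_left (m m' : M) (n : N) :
    tmul B M N (m + m') n = tmul B M N m n + tmul B M N m' n := by
  rw [tmul, TensorProduct.add_tmul, map_add]; rfl

lemma tmul_add_right (m : M) (n n' : N) :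
    tmul B M N m (n + n') = tmul B M N m n + tmul B M N m n' := by
  rw [tmul, TensorProduct.tmul_add, map_add]; rfl

lemma tmul_sum_left {ι : Type*} (s : Finset ι) (m : ι → M) (n : N) :
    tmul B M N (∑ i ∈ s, m i) n = ∑ i ∈ s, tmul B M N (m i) n := by
  rw [tmul, TensorProduct.sum_tmul, map_sum]; rfl

lemma tmul_sum_right {ι : Type*} (s : Finset ι) (m : M) (n : ι → N) :
    tmul B M N m (∑ i ∈ s, n i) = ∑ i ∈ s, tmul B M N m (n i) := by
  rw [tmul, TensorProduct.tmul_sum, map_sum]; rfl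

lemma induction_on {motive : BalTensor B M N → Prop} (x : BalTensor B M N)
    (zero : motive 0) (tmul : ∀ m n, motive (tmul B M N m n))
    (add : ∀ x y, motive x → motive y → motive (x + y)) : motive x := by
  obtain ⟨z, rfl⟩ := mk_surjective B M N x
  induction z using TensorProduct.induction_on with
  | zero => simpa only [map_zero] using zero
  | tmul m n => exact tmul m n
  | add z w hz hw => simpa only [map_add] using add _ _ hz hw

section LeftGenerators

variable {A : Type u} [Ring A] [Module A M] [SMulCommClass A Bᵐᵒᵖ M]

def sumTmulLeft {r : ℕ} (n : Fin r → N) : (Fin r → M) →ₗ[A] BalTensor B M N where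
  toFun f := ∑ i, tmul B M N (f i) (n i)
  map_add' f g := by simp only [Pi.add_apply, tmul_add_left, Finset.sum_add_distrib]
  map_smul' a f := by
    simp only [Pi.smul_apply, RingHom.id_apply, ← lsmul_tmul, Finset.smul_sum]

lemma sumTmulLeft_surjective {r : ℕ} {n : Fin r → N} (hn : Submodule.span B (Set.range n) = ⊤) :
    Function.Surjective (sumTmulLeft (A := A) (B := B) (M := M) n) := by
  rw [← LinearMap.range_eq_top, eq_top_iff]
  rintro x -
  induction x using induction_on with
  | zero => exact zero_mem _
  | tmul m y =>
    have hy : y ∈ Submodule.span B (Set.range n) := hn ▸ Submodule.mem_top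
    obtain ⟨c, rfl⟩ := (Submodule.mem_span_range_iff_exists_fun B).1 hy
    refine ⟨fun i => op (c i) • m, ?_⟩
    simp only [sumTmulLeft, LinearMap.coe_mk, AddHom.coe_mk, balance, tmul_sum_right]
  | add x y hx hy => exact add_mem hx hy

end LeftGenerators

section RightGenerators

variable {C : Type u} [Ring C] [Module Cᵐᵒᵖ N] [SMulCommClass B Cᵐᵒᵖ N]

def sumTmulRight {s : ℕ} (m : Fin s → M) : (Fin s → N) →ₗ[Cᵐᵒᵖ] BalTensor B M N where
  toFun f := ∑ j, tmul B M N (m j) (f j)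
  map_add' f g := by simp only [Pi.add_apply, tmul_add_right, Finset.sum_add_distrib]
  map_smul' c f := by
    simp only [Pi.smul_apply, RingHom.id_apply, ← rsmul_tmul, Finset.smul_sum]

lemma sumTmulRight_surjective {s : ℕ} {m : Fin s → M}
    (hm : Submodule.span Bᵐᵒᵖ (Set.range m) = ⊤) :
    Function.Surjective (sumTmulRight (B := B) (C := C) (N := N) m) := by
  rw [← LinearMap.range_eq_top, eq_top_iff]
  rintro x -
  induction x using induction_on with
  | zero => exact zero_mem _
  | tmul x n =>
    have hx : x ∈ Submodule.span Bᵐᵒᵖ (Set.range m) := hm ▸ Submodule.mem_top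
    obtain ⟨c, rfl⟩ := (Submodule.mem_span_range_iff_exists_fun Bᵐᵒᵖ).1 hx
    refine ⟨fun j => (c j).unop • n, ?_⟩
    simp only [sumTmulRight, LinearMap.coe_mk, AddHom.coe_mk, ← balance, op_unop, tmul_sum_left]
  | add x y hx hy => exact add_mem hx hy

end RightGenerators

end BalTensor

theorem stmt6_general (k A B M N : Type u) [Field k]
    [Ring A]
    [Ring B] [Algebra k B]
    [AddCommGroup M] [Module k M] [Module A M] [Module Bᵐᵒᵖ M]
    [SMulCommClass A Bᵐᵒᵖ M] [IsScalarTower k Bᵐᵒᵖ M]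
    [FiniteDimensional k M]
    [AddCommGroup N] [Module k N] [Module B N] [Module Aᵐᵒᵖ N]
    [SMulCommClass B Aᵐᵒᵖ N] [IsScalarTower k B N]
    [FiniteDimensional k N]
    (hsummand : IsBimodSummand A A A (BalTensor B M N)) :
    (∃ (n : ℕ) (i : A →ₗ[A] (Fin n → M)) (p : (Fin n → M) →ₗ[A] A), ∀ a, p (i a) = a) ∧
    (∃ (n : ℕ) (i : A →ₗ[Aᵐᵒᵖ] (Fin n → N)) (p : (Fin n → N) →ₗ[Aᵐᵒᵖ] A), ∀ a, p (i a) = a) := by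
  obtain ⟨i, p, -, hp, hpi⟩ := hsummand
  have hp_surj : Function.Surjective p := Function.LeftInverse.surjective hpi
  have : Module.Finite B N := .of_restrictScalars_finite k B N
  have : Module.Finite Bᵐᵒᵖ M := .of_restrictScalars_finite k Bᵐᵒᵖ M
  obtain ⟨r, n, hn⟩ := Module.Finite.exists_fin (R := B) (M := N)
  obtain ⟨s, m, hm⟩ := Module.Finite.exists_fin (R := Bᵐᵒᵖ) (M := M)
  constructor
  · let g := hp.toLinearMap ∘ₗ BalTensor.sumTmulLeft n
    obtain ⟨j, hj⟩ := g.exists_rightInverse_of_surjective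
      (LinearMap.range_eq_top.2 (hp_surj.comp (BalTensor.sumTmulLeft_surjective hn)))
    exact ⟨r, j, g, LinearMap.congr_fun hj⟩
  · let g := hp.toOpLinearMap ∘ₗ BalTensor.sumTmulRight m
    obtain ⟨j, hj⟩ := g.exists_rightInverse_of_surjective
      (LinearMap.range_eq_top.2 (hp_surj.comp (BalTensor.sumTmulRight_surjective hm)))
    exact ⟨s, j, g, LinearMap.congr_fun hj⟩

/-- If the regular bimodule `A` is a direct summand of `M ⊗_B N` and
`M ⊗_B −` is left adjoint to `N ⊗_A −`, then `M` generates the category of left `A`-modules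
and `N` generates the category of right `A`-modules: the regular left (resp. right) `A`-module
is a direct summand of a finite direct sum of copies of `M` (resp. `N`). -/
theorem stmt6 (k A B M N : Type u) [Field k]
    [Ring A] [Algebra k A] [FiniteDimensional k A]
    [Ring B] [Algebra k B] [FiniteDimensional k B]
    [AddCommGroup M] [Module k M] [Module A M] [Module Bᵐᵒᵖ M]
    [SMulCommClass A Bᵐᵒᵖ M] [IsScalarTower k A M] [IsScalarTower k Bᵐᵒᵖ M]
    [FiniteDimensional k M]
    [AddCommGroup N] [Module k N] [Module B N] [Module Aᵐᵒᵖ N]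
    [SMulCommClass B Aᵐᵒᵖ N] [IsScalarTower k B N] [IsScalarTower k Aᵐᵒᵖ N]
    [FiniteDimensional k N]
    (hsummand : IsBimodSummand A A A (BalTensor B M N))
    (hadj : TensorAdjunction A B M N) :
    (∃ (n : ℕ) (i : A →ₗ[A] (Fin n → M)) (p : (Fin n → M) →ₗ[A] A), ∀ a, p (i a) = a) ∧
    (∃ (n : ℕ) (i : A →ₗ[Aᵐᵒᵖ] (Fin n → N)) (p : (Fin n → N) →ₗ[Aᵐᵒᵖ] A), ∀ a, p (i a) = a) :=
  stmt6_general k A B M N hsummand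

end

end JJ
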